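/- arXiv:2505.09200 — 2 statements merged into one kernel-verified Lean document; each statement's English description precedes it below -/
import Mathlib

section
/- Let n ≥ 1 and let K ⊆ ℝⁿ be a nonempty compact ball-body. Then Vol(K)^{1/n} + Vol(K^c)^{1/n} ≤ Vol(B(0,1))^{1/n}, where Vol denotes the n-dimensional Lebesgue measure (volume) on ℝⁿ. -/
/-!
Every point of `K` lies within distance `1` of every point of `K^c`, so `K + (-K^c) ⊆ B(0,1)`;
and `K^c ≠ ∅`, since otherwise `K = ∅^c = ℝⁿ` would not be compact. The claim is therefore the
Brunn–Minkowski inequality `Vol(A)^{1/n} + Vol(B)^{1/n} ≤ Vol(A + B)^{1/n}` for `A = K`,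
`B = -K^c`.

Brunn–Minkowski follows from its multiplicative form
`Vol(A)^{1-t} Vol(B)^t ≤ Vol((1-t)A + tB)` by rescaling `A` and `B` to a common volume. The
multiplicative form is proved by induction on the dimension: slicing `ℝ × E` along the first
factor, the slice volumes satisfy the hypothesis of the one-dimensional Prékopa–Leindler
inequality. That inequality, for `sup f = sup g = 1`, is the one-dimensional Brunn–Minkowski
inequality `|X| + |Y| ≤ |X + Y|` for the superlevel sets, integrated over the level via the
layer-cake formula; weighted AM–GM then removes the normalisation.
-/

open Metric Set MeasureTheory

noncomputable section

/-- The `c`-dual of a set `A ⊆ ℝⁿ`. -/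
def cDual {n : ℕ} (A : Set (EuclideanSpace ℝ (Fin n))) : Set (EuclideanSpace ℝ (Fin n)) :=
  {y | ∀ x ∈ A, ‖x - y‖ ≤ 1}

open Pointwise ENNReal Module

theorem ENNReal.rpow_one_sub_mul_rpow (x : ℝ≥0∞) {t : ℝ} (ht₀ : 0 ≤ t) (ht₁ : t ≤ 1) :
    x ^ (1 - t) * x ^ t = x := by
  rw [← ENNReal.rpow_add_of_nonneg _ _ (sub_nonneg.2 ht₁) ht₀, sub_add_cancel, ENNReal.rpow_one]

theorem ENNReal.rpow_mul_rpow_le_add {t : ℝ} (ht₀ : 0 < t) (ht₁ : t < 1) (a b : ℝ≥0∞) :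
    a ^ (1 - t) * b ^ t ≤ ENNReal.ofReal (1 - t) * a + ENNReal.ofReal t * b := by
  have h1t : 0 < 1 - t := sub_pos.2 ht₁
  have := ENNReal.young_inequality (a ^ (1 - t)) (b ^ t)
    (Real.HolderConjugate.inv_inv h1t ht₀ (sub_add_cancel 1 t))
  rwa [← ENNReal.rpow_mul, ← ENNReal.rpow_mul, mul_inv_cancel₀ h1t.ne', mul_inv_cancel₀ ht₀.ne',
    ENNReal.rpow_one, ENNReal.rpow_one, div_eq_mul_inv, div_eq_mul_inv,
    ← ENNReal.ofReal_inv_of_pos (inv_pos.2 h1t), ← ENNReal.ofReal_inv_of_pos (inv_pos.2 ht₀),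
    inv_inv, inv_inv, mul_comm a, mul_comm b] at this

theorem Real.volume_Ioi_inter_ofReal_lt (x : ℝ≥0∞) :
    volume ({τ : ℝ | ENNReal.ofReal τ < x} ∩ Ioi 0) = x := by
  rcases eq_or_ne x ⊤ with rfl | hx
  · simp
  · have : {τ : ℝ | ENNReal.ofReal τ < x} ∩ Ioi 0 = Ioo 0 x.toReal := by
      ext τ
      simp only [mem_inter_iff, mem_ofPred_eq, mem_Ioi, mem_Ioo]
      exact ⟨fun h => ⟨h.2, (ENNReal.ofReal_lt_iff_lt_toReal h.2.le hx).1 h.1⟩,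
        fun h => ⟨(ENNReal.ofReal_lt_iff_lt_toReal h.1.le hx).2 h.2, h.1⟩⟩
    rw [this, Real.volume_Ioo, sub_zero, ENNReal.ofReal_toReal hx]

theorem lintegral_eq_lintegral_meas_ofReal_lt {α : Type*} [MeasurableSpace α] (μ : Measure α)
    [SFinite μ] {f : α → ℝ≥0∞} (hf : Measurable f) :
    ∫⁻ a, f a ∂μ = ∫⁻ τ in Ioi 0, μ {a | ENNReal.ofReal τ < f a} := by
  have hS : MeasurableSet {p : α × ℝ | ENNReal.ofReal p.2 < f p.1} :=
    measurableSet_lt (ENNReal.measurable_ofReal.comp measurable_snd) (hf.comp measurable_fst)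
  calc ∫⁻ a, f a ∂μ = (μ.prod (volume.restrict (Ioi 0))) {p | ENNReal.ofReal p.2 < f p.1} := by
        rw [Measure.prod_apply hS]
        refine lintegral_congr fun a => ?_
        rw [Measure.restrict_apply (measurable_prodMk_left hS)]
        exact (Real.volume_Ioi_inter_ofReal_lt (f a)).symm
    _ = _ := Measure.prod_apply_symm hS

theorem measure_le_measure_add_left {G : Type*} [AddGroup G] [MeasurableSpace G]
    [MeasurableAdd G] (μ : Measure G) [μ.IsAddLeftInvariant] {A B : Set G} (hA : A.Nonempty) :
    μ B ≤ μ (A + B) := by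
  obtain ⟨a, ha⟩ := hA
  calc μ B = μ (a +ᵥ B) := (measure_vadd μ a B).symm
    _ ≤ μ (A + B) := measure_mono (vadd_set_subset_add ha)

theorem measure_le_measure_add_right {G : Type*} [AddCommGroup G] [MeasurableSpace G]
    [MeasurableAdd G] (μ : Measure G) [μ.IsAddLeftInvariant] {A B : Set G} (hB : B.Nonempty) :
    μ A ≤ μ (A + B) :=
  add_comm B A ▸ measure_le_measure_add_left μ hB

theorem Real.volume_add_volume_le_volume_add_of_isCompact {K L : Set ℝ} (hK : IsCompact K)
    (hL : IsCompact L) (hK₀ : K.Nonempty) (hL₀ : L.Nonempty) :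
    volume K + volume L ≤ volume (K + L) := by
  set a := sSup K
  set b := sInf L
  -- `K + b` and `a + L` lie in `K + L` on either side of `a + b`.
  have hKb : b +ᵥ K ⊆ Iic (a + b) := by
    rintro _ ⟨x, hx, rfl⟩
    show b + x ≤ a + b
    linarith [le_csSup hK.bddAbove hx]
  have haL : a +ᵥ L ⊆ Ici (a + b) := by
    rintro _ ⟨y, hy, rfl⟩
    show a + b ≤ a + y
    linarith [csInf_le hL.bddBelow hy]
  have hdisj : AEDisjoint volume (b +ᵥ K) (a +ᵥ L) := by
    refine measure_mono_null (fun z hz => ?_) (measure_singleton (a + b))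
    exact le_antisymm (hKb hz.1) (haL hz.2)
  calc volume K + volume L = volume ((b +ᵥ K) ∪ (a +ᵥ L)) := by
        rw [measure_union₀ (hL.vadd a).measurableSet.nullMeasurableSet hdisj, measure_vadd,
          measure_vadd]
    _ ≤ volume (K + L) := by
        refine measure_mono (union_subset ?_ (vadd_set_subset_add (hK.sSup_mem hK₀)))
        rw [add_comm]
        exact vadd_set_subset_add (hL.sInf_mem hL₀)

theorem Real.volume_add_volume_le_volume_add {X Y : Set ℝ} (hX : MeasurableSet X)
    (hY : MeasurableSet Y) (hX₀ : X.Nonempty) (hY₀ : Y.Nonempty) :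
    volume X + volume Y ≤ volume (X + Y) := by
  rcases eq_or_ne (volume X) 0 with hX0 | hX0
  · simpa [hX0] using measure_le_measure_add_left volume hX₀
  rcases eq_or_ne (volume Y) 0 with hY0 | hY0
  · simpa [hY0] using measure_le_measure_add_right volume hY₀
  refine le_of_forall_lt fun c hc => ?_
  obtain ⟨a, ha, b, hb, hab⟩ := ENNReal.exists_lt_add_of_lt_add hc hX0 hY0
  obtain ⟨K, hKX, hK, haK⟩ := hX.exists_lt_isCompact ha
  obtain ⟨L, hLY, hL, hbL⟩ := hY.exists_lt_isCompact hb
  calc c < volume K + volume L := hab.trans (ENNReal.add_lt_add haK hbL)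
    _ ≤ volume (K + L) := volume_add_volume_le_volume_add_of_isCompact hK hL
        (nonempty_of_measure_ne_zero (pos_of_gt haK).ne')
        (nonempty_of_measure_ne_zero (pos_of_gt hbL).ne')
    _ ≤ volume (X + Y) := measure_mono (add_subset_add hKX hLY)

section PrekopaLeindler

variable {t : ℝ} {f g h : ℝ → ℝ≥0∞}

theorem Real.prekopa_leindler_of_iSup_eq_one (ht₀ : 0 < t) (ht₁ : t < 1) (hf : Measurable f)
    (hg : Measurable g) (hh : Measurable h) (hf₁ : ⨆ r, f r = 1) (hg₁ : ⨆ r, g r = 1)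
    (hfgh : ∀ r s, f r ^ (1 - t) * g s ^ t ≤ h ((1 - t) * r + t * s)) :
    ENNReal.ofReal (1 - t) * (∫⁻ r, f r) + ENNReal.ofReal t * ∫⁻ r, g r ≤ ∫⁻ r, h r := by
  have h1t : 0 < 1 - t := sub_pos.2 ht₁
  have hlevel : ∀ τ > 0, ENNReal.ofReal (1 - t) * volume {r | ENNReal.ofReal τ < f r} +
      ENNReal.ofReal t * volume {r | ENNReal.ofReal τ < g r} ≤
        volume {r | ENNReal.ofReal τ < h r} := by
    intro τ hτ
    set X := {r | ENNReal.ofReal τ < f r}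
    set Y := {r | ENNReal.ofReal τ < g r}
    rcases le_or_gt 1 τ with hτ₁ | hτ₁
    · have hX : X = ∅ := eq_empty_of_forall_notMem fun r hr =>
        (hr.trans_le (hf₁ ▸ le_iSup f r)).not_ge (by simpa using hτ₁)
      have hY : Y = ∅ := eq_empty_of_forall_notMem fun r hr =>
        (hr.trans_le (hg₁ ▸ le_iSup g r)).not_ge (by simpa using hτ₁)
      simp [hX, hY]
    have hτ₁' : ENNReal.ofReal τ < 1 := ENNReal.ofReal_lt_one.2 hτ₁
    obtain ⟨r₀, hr₀⟩ := lt_iSup_iff.1 (hf₁ ▸ hτ₁')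
    obtain ⟨s₀, hs₀⟩ := lt_iSup_iff.1 (hg₁ ▸ hτ₁')
    have hXm : MeasurableSet X := measurableSet_lt measurable_const hf
    have hYm : MeasurableSet Y := measurableSet_lt measurable_const hg
    have hsub : (1 - t) • X + t • Y ⊆ {r | ENNReal.ofReal τ < h r} := by
      rintro _ ⟨_, ⟨r, hr, rfl⟩, _, ⟨s, hs, rfl⟩, rfl⟩
      refine lt_of_lt_of_le ?_ (hfgh r s)
      rw [← ENNReal.rpow_one_sub_mul_rpow (ENNReal.ofReal τ) ht₀.le ht₁.le]
      exact ENNReal.mul_lt_mul (ENNReal.rpow_lt_rpow hr h1t) (ENNReal.rpow_lt_rpow hs ht₀)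
    calc ENNReal.ofReal (1 - t) * volume X + ENNReal.ofReal t * volume Y
        = volume ((1 - t) • X) + volume (t • Y) := by
          simp only [Measure.addHaar_smul_of_nonneg _ h1t.le,
            Measure.addHaar_smul_of_nonneg _ ht₀.le, finrank_self, pow_one]
      _ ≤ volume ((1 - t) • X + t • Y) :=
          Real.volume_add_volume_le_volume_add (hXm.const_smul₀ _) (hYm.const_smul₀ _)
            ⟨_, smul_mem_smul_set hr₀⟩ ⟨_, smul_mem_smul_set hs₀⟩
      _ ≤ volume {r | ENNReal.ofReal τ < h r} := measure_mono hsub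
  calc ENNReal.ofReal (1 - t) * (∫⁻ r, f r) + ENNReal.ofReal t * ∫⁻ r, g r
      = (∫⁻ τ in Ioi 0, ENNReal.ofReal (1 - t) * volume {r | ENNReal.ofReal τ < f r}) +
          ∫⁻ τ in Ioi 0, ENNReal.ofReal t * volume {r | ENNReal.ofReal τ < g r} := by
        rw [lintegral_eq_lintegral_meas_ofReal_lt volume hf,
          lintegral_eq_lintegral_meas_ofReal_lt volume hg,
          lintegral_const_mul' _ _ ofReal_ne_top, lintegral_const_mul' _ _ ofReal_ne_top]
    _ ≤ ∫⁻ τ in Ioi 0, volume {r | ENNReal.ofReal τ < h r} :=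
        (le_lintegral_add _ _).trans (setLIntegral_mono' measurableSet_Ioi hlevel)
    _ = ∫⁻ r, h r := (lintegral_eq_lintegral_meas_ofReal_lt volume hh).symm

theorem Real.prekopa_leindler (ht₀ : 0 < t) (ht₁ : t < 1) (hf : Measurable f)
    (hg : Measurable g) (hh : Measurable h) (hf_top : ⨆ r, f r ≠ ∞) (hg_top : ⨆ r, g r ≠ ∞)
    (hfgh : ∀ r s, f r ^ (1 - t) * g s ^ t ≤ h ((1 - t) * r + t * s)) :
    (∫⁻ r, f r) ^ (1 - t) * (∫⁻ r, g r) ^ t ≤ ∫⁻ r, h r := by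
  have h1t : 0 < 1 - t := sub_pos.2 ht₁
  set F := ⨆ r, f r
  set G := ⨆ r, g r
  rcases eq_or_ne F 0 with hF | hF
  · simp [ENNReal.iSup_eq_zero.1 hF, ENNReal.zero_rpow_of_pos h1t]
  rcases eq_or_ne G 0 with hG | hG
  · simp [ENNReal.iSup_eq_zero.1 hG, ENNReal.zero_rpow_of_pos ht₀]
  set c := F ^ (1 - t) * G ^ t
  have hc₀ : c ≠ 0 := mul_ne_zero (ENNReal.rpow_pos (pos_iff_ne_zero.2 hF) hf_top).ne'
    (ENNReal.rpow_pos (pos_iff_ne_zero.2 hG) hg_top).ne'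
  have hc_top : c ≠ ∞ := ENNReal.mul_ne_top (ENNReal.rpow_ne_top_of_nonneg h1t.le hf_top)
    (ENNReal.rpow_ne_top_of_nonneg ht₀.le hg_top)
  have hscale : ∀ x y : ℝ≥0∞,
      (F⁻¹ * x) ^ (1 - t) * (G⁻¹ * y) ^ t = c⁻¹ * (x ^ (1 - t) * y ^ t) := by
    intro x y
    rw [ENNReal.mul_rpow_of_nonneg _ _ h1t.le, ENNReal.mul_rpow_of_nonneg _ _ ht₀.le,
      ENNReal.inv_rpow, ENNReal.inv_rpow, ENNReal.mul_inv (Or.inr ?_) (Or.inr ?_),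
      mul_mul_mul_comm]
    · exact ENNReal.rpow_ne_top_of_nonneg ht₀.le hg_top
    · exact (ENNReal.rpow_pos (pos_iff_ne_zero.2 hG) hg_top).ne'
  have hnormalized := Real.prekopa_leindler_of_iSup_eq_one ht₀ ht₁ (hf.const_mul F⁻¹)
    (hg.const_mul G⁻¹) (hh.const_mul c⁻¹)
    (by rw [← ENNReal.mul_iSup, ENNReal.inv_mul_cancel hF hf_top])
    (by rw [← ENNReal.mul_iSup, ENNReal.inv_mul_cancel hG hg_top])
    (fun r s => (hscale _ _).trans_le (mul_le_mul_right (hfgh r s) _))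
  calc (∫⁻ r, f r) ^ (1 - t) * (∫⁻ r, g r) ^ t
      = c * ((F⁻¹ * ∫⁻ r, f r) ^ (1 - t) * (G⁻¹ * ∫⁻ r, g r) ^ t) := by
        rw [hscale, ← mul_assoc, ENNReal.mul_inv_cancel hc₀ hc_top, one_mul]
    _ ≤ c * (ENNReal.ofReal (1 - t) * (∫⁻ r, F⁻¹ * f r) + ENNReal.ofReal t * ∫⁻ r, G⁻¹ * g r) := by
        rw [lintegral_const_mul _ hf, lintegral_const_mul _ hg]
        gcongr
        exact ENNReal.rpow_mul_rpow_le_add ht₀ ht₁ _ _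
    _ ≤ c * ∫⁻ r, c⁻¹ * h r := by gcongr
    _ = ∫⁻ r, h r := by
        rw [lintegral_const_mul _ hh, ← mul_assoc, ENNReal.mul_inv_cancel hc₀ hc_top, one_mul]

end PrekopaLeindler

theorem IsCompact.preimage_prodMk {X Y : Type*} [TopologicalSpace X] [TopologicalSpace Y]
    [T2Space X] [T2Space Y] {A : Set (X × Y)} (hA : IsCompact A) (x : X) :
    IsCompact (Prod.mk x ⁻¹' A) :=
  (hA.image continuous_snd).of_isClosed_subset (hA.isClosed.preimage (Continuous.prodMk_right x))
    fun y hy => ⟨(x, y), hy, rfl⟩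

theorem smul_preimage_prodMk_add_smul_preimage_prodMk_subset {R E : Type*} [CommSemiring R]
    [AddCommMonoid E] [Module R E] (A B : Set (R × E)) (a b r s : R) :
    a • (Prod.mk r ⁻¹' A) + b • (Prod.mk s ⁻¹' B) ⊆
      Prod.mk (a * r + b * s) ⁻¹' (a • A + b • B) := by
  rintro _ ⟨_, ⟨x, hx, rfl⟩, _, ⟨y, hy, rfl⟩, rfl⟩
  exact ⟨a • (r, x), smul_mem_smul_set hx, b • (s, y), smul_mem_smul_set hy, by simp⟩

theorem IsCompact.smul_add_smul {M E : Type*} [TopologicalSpace E] [Add E] [ContinuousAdd E]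
    [SMul M E] [ContinuousConstSMul M E] {A B : Set E} (hA : IsCompact A) (hB : IsCompact B)
    (a b : M) : IsCompact (a • A + b • B) :=
  (hA.smul a).add (hB.smul b)

section MulBrunnMinkowski

variable {E F : Type*} [NormedAddCommGroup E] [NormedSpace ℝ E] [MeasurableSpace E]
  [NormedAddCommGroup F] [NormedSpace ℝ F] [MeasurableSpace F] {μ : Measure E}

def MulBrunnMinkowski (μ : Measure E) : Prop :=
  ∀ ⦃A B : Set E⦄, IsCompact A → IsCompact B → ∀ ⦃t : ℝ⦄, 0 < t → t < 1 →
    μ A ^ (1 - t) * μ B ^ t ≤ μ ((1 - t) • A + t • B)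

theorem mulBrunnMinkowski_of_subsingleton [Subsingleton E] (μ : Measure E) :
    MulBrunnMinkowski μ := by
  intro A B _ _ t ht₀ ht₁
  rcases A.eq_empty_or_nonempty with rfl | hA
  · simp [ENNReal.zero_rpow_of_pos (sub_pos.2 ht₁)]
  rcases B.eq_empty_or_nonempty with rfl | hB
  · simp [ENNReal.zero_rpow_of_pos ht₀]
  have hC : ((1 - t) • A + t • B).Nonempty := (hA.smul_set.add hB.smul_set)
  rw [hC.eq_univ, hA.eq_univ, hB.eq_univ, ENNReal.rpow_one_sub_mul_rpow _ ht₀.le ht₁.le]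

theorem MulBrunnMinkowski.smul (h : MulBrunnMinkowski μ) (c : ℝ≥0∞) :
    MulBrunnMinkowski (c • μ) := by
  intro A B hA hB t ht₀ ht₁
  simp only [Measure.smul_apply, smul_eq_mul]
  rw [ENNReal.mul_rpow_of_nonneg _ _ (sub_pos.2 ht₁).le, ENNReal.mul_rpow_of_nonneg _ _ ht₀.le,
    mul_mul_mul_comm, ENNReal.rpow_one_sub_mul_rpow _ ht₀.le ht₁.le]
  gcongr
  exact h hA hB ht₀ ht₁

theorem MulBrunnMinkowski.map [BorelSpace E] [BorelSpace F] (h : MulBrunnMinkowski μ)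
    (e : E ≃L[ℝ] F) : MulBrunnMinkowski (μ.map e) := by
  intro A B hA hB t ht₀ ht₁
  simp only [Measure.map_apply e.continuous.measurable, hA.measurableSet, hB.measurableSet,
    (hA.smul_add_smul hB _ _).measurableSet, ← e.image_symm_eq_preimage, Set.image_add,
    image_smul_set]
  exact h (hA.image e.symm.continuous) (hB.image e.symm.continuous) ht₀ ht₁

theorem MulBrunnMinkowski.prod [BorelSpace E] [SFinite μ] [IsFiniteMeasureOnCompacts μ]
    (h : MulBrunnMinkowski μ) : MulBrunnMinkowski ((volume : Measure ℝ).prod μ) := by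
  intro A B hA hB t ht₀ ht₁
  have hC := hA.smul_add_smul hB (1 - t) t
  have hslice_bdd : ∀ {S : Set (ℝ × E)}, IsCompact S → ⨆ r, μ (Prod.mk r ⁻¹' S) ≠ ∞ :=
    fun hS => ne_top_of_le_ne_top (hS.image continuous_snd).measure_ne_top
      (iSup_le fun r => measure_mono fun y hy => ⟨(r, y), hy, rfl⟩)
  rw [Measure.prod_apply hA.measurableSet, Measure.prod_apply hB.measurableSet,
    Measure.prod_apply hC.measurableSet]
  refine Real.prekopa_leindler ht₀ ht₁ (measurable_measure_prodMk_left hA.measurableSet)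
    (measurable_measure_prodMk_left hB.measurableSet)
    (measurable_measure_prodMk_left hC.measurableSet) (hslice_bdd hA) (hslice_bdd hB)
    fun r s => ?_
  exact (h (hA.preimage_prodMk r) (hB.preimage_prodMk s) ht₀ ht₁).trans
    (measure_mono (smul_preimage_prodMk_add_smul_preimage_prodMk_subset A B _ _ r s))

theorem measurePreserving_finConsEquivL (n : ℕ) :
    MeasurePreserving (Fin.consEquivL ℝ fun _ : Fin (n + 1) => ℝ) (volume.prod volume) volume := by
  have : ⇑(Fin.consEquivL ℝ fun _ : Fin (n + 1) => ℝ) =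
      (MeasurableEquiv.piFinSuccAbove (fun _ => ℝ) 0).symm := by
    ext p i
    simp
  rw [this]
  exact (volume_preserving_piFinSuccAbove _ 0).symm

theorem mulBrunnMinkowski_volume_pi (n : ℕ) :
    MulBrunnMinkowski (volume : Measure (Fin n → ℝ)) := by
  induction n with
  | zero => exact mulBrunnMinkowski_of_subsingleton _
  | succ n ih =>
    rw [← (measurePreserving_finConsEquivL n).map_eq]
    exact ih.prod.map _

theorem mulBrunnMinkowski_of_isAddHaarMeasure [BorelSpace E] [FiniteDimensional ℝ E]
    (μ : Measure E) [μ.IsAddHaarMeasure] : MulBrunnMinkowski μ := by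
  let e : (Fin (finrank ℝ E) → ℝ) ≃L[ℝ] E := ContinuousLinearEquiv.ofFinrankEq (by simp)
  rw [μ.isAddLeftInvariant_eq_smul (volume.map e), ENNReal.smul_def]
  exact ((mulBrunnMinkowski_volume_pi _).map e).smul _

theorem brunn_minkowski [BorelSpace E] [FiniteDimensional ℝ E] (μ : Measure E)
    [μ.IsAddHaarMeasure] (hE : 0 < finrank ℝ E) {A B : Set E} (hA : IsCompact A)
    (hB : IsCompact B) (hA₀ : A.Nonempty) (hB₀ : B.Nonempty) :
    (μ A).toReal ^ (finrank ℝ E : ℝ)⁻¹ + (μ B).toReal ^ (finrank ℝ E : ℝ)⁻¹ ≤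
      (μ (A + B)).toReal ^ (finrank ℝ E : ℝ)⁻¹ := by
  set d := finrank ℝ E with hd_def
  have hd : (0 : ℝ) < d := Nat.cast_pos.2 hE
  have hAB_top : μ (A + B) ≠ ∞ := (hA.add hB).measure_ne_top
  rcases eq_or_ne (μ A) 0 with hA0 | hA0
  · rw [hA0, toReal_zero, Real.zero_rpow (inv_pos.2 hd).ne', zero_add]
    exact Real.rpow_le_rpow toReal_nonneg
      (ENNReal.toReal_mono hAB_top (measure_le_measure_add_left μ hA₀)) (inv_pos.2 hd).le
  rcases eq_or_ne (μ B) 0 with hB0 | hB0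
  · rw [hB0, toReal_zero, Real.zero_rpow (inv_pos.2 hd).ne', add_zero]
    exact Real.rpow_le_rpow toReal_nonneg
      (ENNReal.toReal_mono hAB_top (measure_le_measure_add_right μ hB₀)) (inv_pos.2 hd).le
  set α := (μ A).toReal ^ (d : ℝ)⁻¹
  set β := (μ B).toReal ^ (d : ℝ)⁻¹
  have hα : 0 < α := Real.rpow_pos_of_pos (ENNReal.toReal_pos hA0 hA.measure_ne_top) _
  have hβ : 0 < β := Real.rpow_pos_of_pos (ENNReal.toReal_pos hB0 hB.measure_ne_top) _
  set s := α + β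
  -- Rescaling `A` and `B` to the common volume `s ^ d` and taking `t = β / s` gives back `A + B`.
  have hrescale : ∀ {S : Set E}, IsCompact S → μ S ≠ 0 →
      μ ((s / (μ S).toReal ^ (d : ℝ)⁻¹) • S) = ENNReal.ofReal (s ^ d) := by
    intro S hS hS0
    have hS_pos : 0 < (μ S).toReal := ENNReal.toReal_pos hS0 hS.measure_ne_top
    rw [Measure.addHaar_smul_of_nonneg μ (by positivity), ← hd_def, div_pow,
      Real.rpow_inv_natCast_pow hS_pos.le hE.ne', ENNReal.ofReal_div_of_pos hS_pos,
      ENNReal.ofReal_toReal hS.measure_ne_top, ENNReal.div_mul_cancel hS0 hS.measure_ne_top]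
  have hcomb : (1 - β / s) • ((s / α) • A) + (β / s) • ((s / β) • B) = A + B := by
    rw [smul_smul, smul_smul, one_sub_div (by positivity), add_sub_cancel_right,
      div_mul_div_cancel₀ (by positivity), div_mul_div_cancel₀ (by positivity), div_self hα.ne',
      div_self hβ.ne', one_smul, one_smul]
  have ht₀ : 0 < β / s := by positivity
  have ht₁ : β / s < 1 := (div_lt_one (by positivity)).2 (lt_add_of_pos_left β hα)
  have key := mulBrunnMinkowski_of_isAddHaarMeasure μ (hA.smul (s / α)) (hB.smul (s / β)) ht₀ ht₁
  rw [hcomb, hrescale hA hA0, hrescale hB hB0, ENNReal.rpow_one_sub_mul_rpow _ ht₀.le ht₁.le,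
    ENNReal.ofReal_le_iff_le_toReal hAB_top] at key
  rw [Real.le_rpow_inv_iff_of_pos (by positivity) toReal_nonneg hd, Real.rpow_natCast]
  exact key

end MulBrunnMinkowski

section cDual

variable {n : ℕ} {A : Set (EuclideanSpace ℝ (Fin n))}

theorem cDual_eq_biInter (A : Set (EuclideanSpace ℝ (Fin n))) :
    cDual A = ⋂ x ∈ A, closedBall x 1 := by
  ext y
  simp [cDual, dist_eq_norm, norm_sub_rev]

theorem cDual_empty : cDual (∅ : Set (EuclideanSpace ℝ (Fin n))) = univ := by
  simp [cDual_eq_biInter]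

theorem isCompact_cDual (hA : A.Nonempty) : IsCompact (cDual A) := by
  obtain ⟨x, hx⟩ := hA
  rw [cDual_eq_biInter]
  exact (isCompact_closedBall x 1).of_isClosed_subset
    (isClosed_biInter fun _ _ => isClosed_closedBall) (biInter_subset_of_mem hx)

theorem cDual_nonempty_of_isCompact (hn : 1 ≤ n) (hA : IsCompact A) (hbb : A = cDual (cDual A)) :
    (cDual A).Nonempty := by
  refine nonempty_iff_ne_empty.2 fun h => ?_
  have : Nontrivial (EuclideanSpace ℝ (Fin n)) := by
    have : Nonempty (Fin n) := ⟨⟨0, hn⟩⟩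
    infer_instance
  rw [h, cDual_empty] at hbb
  exact noncompact_univ _ (hbb ▸ hA)

theorem add_neg_cDual_subset_closedBall (A : Set (EuclideanSpace ℝ (Fin n))) :
    A + -cDual A ⊆ closedBall 0 1 := by
  rintro _ ⟨x, hx, y, hy, rfl⟩
  simpa [← sub_eq_add_neg] using hy x hx

end cDual

/-- Santaló-type inequality: for a nonempty compact ball-body `K ⊆ ℝⁿ`,
`Vol(K)^{1/n} + Vol(K^c)^{1/n} ≤ Vol(B(0,1))^{1/n}`. -/
theorem stmt4 (n : ℕ) (hn : 1 ≤ n) (K : Set (EuclideanSpace ℝ (Fin n)))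
    (hne : K.Nonempty) (hcomp : IsCompact K) (hbb : K = cDual (cDual K)) :
    (volume K).toReal ^ ((n : ℝ)⁻¹) + (volume (cDual K)).toReal ^ ((n : ℝ)⁻¹) ≤
      (volume (closedBall (0 : EuclideanSpace ℝ (Fin n)) 1)).toReal ^ ((n : ℝ)⁻¹) := by
  have hBM := brunn_minkowski volume (by rwa [finrank_euclideanSpace_fin]) hcomp
    (isCompact_cDual hne).neg hne (cDual_nonempty_of_isCompact hn hcomp hbb).neg
  rw [finrank_euclideanSpace_fin, Measure.measure_neg] at hBM
  refine hBM.trans (Real.rpow_le_rpow toReal_nonneg ?_ (by positivity))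
  exact ENNReal.toReal_mono measure_closedBall_lt_top.ne
    (measure_mono (add_neg_cDual_subset_closedBall K))
end
end

section
/- Let n ≥ 1, let δ ∈ (0,1) and let A ⊆ ℝⁿ be a set such that the Minkowski sum A + B(0,δ) is contained in some closed ball of radius 1 (i.e. has out-radius at most 1). Then, with η(δ) = √(2δ − δ²), one has the inclusions (A + B(0,δ))^c ⊆ A^c ⊆ (A + B(0,δ))^c + B(0, η(δ)). -/
open Metric Set Pointwise

noncomputable section

/-!
The first inclusion is antitonicity of the dual. For the second, the out-radius condition puts
`A` inside a ball `B(x, 1 - δ)`, so for `y ∈ A^c` the set `A` lies in the lens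
`B(y, 1) ∩ B(x, 1 - δ)`. By the parallelogram law, this lens lies in a ball of radius `1 - δ`
centred at a point `z` of the segment `[y, x]` with `|y - z| ≤ √(1 - (1 - δ)²) = η(δ)`; then
`A + B(0, δ) ⊆ B(z, 1)`, i.e. `z ∈ (A + B(0, δ))^c`, and `y = z + (y - z)`.
-/

open AffineMap

section NormedSpace

variable {E : Type*} [NormedAddCommGroup E] [NormedSpace ℝ E]

theorem add_dist_le_of_closedBall_subset_closedBall {a x : E} {r R : ℝ} (hr : 0 ≤ r)
    (hrR : r ≤ R) (h : closedBall a r ⊆ closedBall x R) : r + dist a x ≤ R := by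
  rcases eq_or_ne a x with rfl | hax
  · simpa using hrR
  have hd : 0 < dist x a := dist_pos.2 hax.symm
  set p := lineMap x a (1 + r / dist x a)
  have hpa : dist p a = r := by
    rw [dist_lineMap_right, sub_add_cancel_left, norm_neg, Real.norm_of_nonneg (by positivity),
      div_mul_cancel₀ _ hd.ne']
  have hpx : dist p x = dist x a + r := by
    rw [dist_lineMap_left, Real.norm_of_nonneg (by positivity), add_mul, one_mul,
      div_mul_cancel₀ _ hd.ne']
  have hpR := h (mem_closedBall.2 hpa.le)
  rw [mem_closedBall, hpx, dist_comm] at hpR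
  linarith

theorem subset_closedBall_sub_of_add_closedBall_zero_subset {A : Set E} {x : E} {δ R : ℝ}
    (hδ : 0 ≤ δ) (hδR : δ ≤ R) (h : A + closedBall 0 δ ⊆ closedBall x R) :
    A ⊆ closedBall x (R - δ) := fun a ha => by
  have hball : closedBall a δ ⊆ closedBall x R :=
    singleton_add_closedBall_zero δ a ▸ (add_subset_add_right (singleton_subset_iff.2 ha)).trans h
  rw [mem_closedBall, le_sub_iff_add_le']
  exact add_dist_le_of_closedBall_subset_closedBall hδ hδR hball

end NormedSpace

theorem add_closedBall_zero_subset_closedBall {E : Type*} [SeminormedAddCommGroup E]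
    {A : Set E} {z : E} {r : ℝ} (h : A ⊆ closedBall z r) (δ : ℝ) :
    A + closedBall 0 δ ⊆ closedBall z (r + δ) := by
  rintro _ ⟨a, ha, b, hb, rfl⟩
  rw [mem_closedBall_zero_iff] at hb
  calc dist (a + b) z ≤ dist (a + b) a + dist a z := dist_triangle _ _ _
    _ ≤ r + δ := by rw [dist_self_add_left]; linarith [mem_closedBall.1 (h ha)]

section InnerProductSpace

variable {E : Type*} [NormedAddCommGroup E] [InnerProductSpace ℝ E]

theorem dist_lineMap_sq (a x y : E) (t : ℝ) :
    dist a (lineMap y x t) ^ 2 =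
      (1 - t) * dist a y ^ 2 + t * dist a x ^ 2 - t * (1 - t) * dist y x ^ 2 := by
  have hz : a - lineMap y x t = (a - y) - t • (x - y) := by
    rw [lineMap_apply_module]; module
  have hx : a - x = (a - y) - (x - y) := by abel
  rw [dist_eq_norm, dist_eq_norm, dist_eq_norm, dist_eq_norm, hz, hx, norm_sub_rev y x,
    norm_sub_sq_real (a - y), norm_sub_sq_real (a - y), norm_smul, real_inner_smul_right,
    mul_pow, Real.norm_eq_abs, sq_abs]
  ring

theorem exists_dist_le_sqrt_and_closedBall_inter_subset {r R : ℝ} (hr : 0 ≤ r) (hrR : r ≤ R)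
    (x y : E) :
    ∃ z, dist y z ≤ √(R ^ 2 - r ^ 2) ∧ closedBall y R ∩ closedBall x r ⊆ closedBall z r := by
  set η := √(R ^ 2 - r ^ 2)
  have hη : η ^ 2 = R ^ 2 - r ^ 2 := Real.sq_sqrt (by nlinarith)
  set d := dist y x
  rcases le_or_gt d η with hdη | hdη
  · exact ⟨x, hdη, inter_subset_right⟩
  have hd : 0 < d := (Real.sqrt_nonneg _).trans_lt hdη
  -- `t * d² = R² - r²` is exactly what makes the bound from `dist_lineMap_sq` equal to `r²`.
  set t := η ^ 2 / d ^ 2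
  have htd : t * d ^ 2 = η ^ 2 := div_mul_cancel₀ _ (by positivity)
  have ht0 : 0 ≤ t := by positivity
  have ht1 : t ≤ 1 :=
    div_le_one_of_le₀ (pow_le_pow_left₀ (Real.sqrt_nonneg _) hdη.le 2) (by positivity)
  refine ⟨lineMap y x t, ?_, fun a ⟨hay, hax⟩ => ?_⟩
  · rw [dist_comm, dist_lineMap_left, Real.norm_of_nonneg ht0,
      show η ^ 2 / d ^ 2 * d = η ^ 2 / d by field_simp, div_le_iff₀ hd]
    nlinarith [Real.sqrt_nonneg (R ^ 2 - r ^ 2)]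
  · rw [mem_closedBall] at hay hax ⊢
    have hay2 : dist a y ^ 2 ≤ R ^ 2 := pow_le_pow_left₀ dist_nonneg hay 2
    have hax2 : dist a x ^ 2 ≤ r ^ 2 := pow_le_pow_left₀ dist_nonneg hax 2
    refine le_of_pow_le_pow_left₀ two_ne_zero hr ?_
    rw [dist_lineMap_sq]
    nlinarith [mul_le_mul_of_nonneg_left hay2 (sub_nonneg.2 ht1),
      mul_le_mul_of_nonneg_left hax2 ht0]

end InnerProductSpace

section cDual

variable {n : ℕ}

theorem mem_cDual_iff {A : Set (EuclideanSpace ℝ (Fin n))} {y : EuclideanSpace ℝ (Fin n)} :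
    y ∈ cDual A ↔ A ⊆ closedBall y 1 := by
  simp only [cDual, subset_def, mem_closedBall, dist_eq_norm]
  rfl

theorem cDual_antitone : Antitone (cDual (n := n)) :=
  fun _ _ h _ hy x hx => hy x (h hx)

end cDual

theorem stmt9_general (n : ℕ) (δ : ℝ) (hδ : δ ∈ Set.Ioo (0 : ℝ) 1)
    (A : Set (EuclideanSpace ℝ (Fin n)))
    (hout : ∃ x : EuclideanSpace ℝ (Fin n),
      A + closedBall (0 : EuclideanSpace ℝ (Fin n)) δ ⊆ closedBall x 1) :
    cDual (A + closedBall (0 : EuclideanSpace ℝ (Fin n)) δ) ⊆ cDual A ∧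
      cDual A ⊆ cDual (A + closedBall (0 : EuclideanSpace ℝ (Fin n)) δ) +
        closedBall (0 : EuclideanSpace ℝ (Fin n)) (Real.sqrt (2 * δ - δ ^ 2)) := by
  obtain ⟨hδ0, hδ1⟩ := hδ
  refine ⟨cDual_antitone (subset_add_left A (mem_closedBall_self hδ0.le)), fun y hy => ?_⟩
  obtain ⟨x, hx⟩ := hout
  have hAx : A ⊆ closedBall x (1 - δ) :=
    subset_closedBall_sub_of_add_closedBall_zero_subset hδ0.le hδ1.le hx
  obtain ⟨z, hyz, hz⟩ := exists_dist_le_sqrt_and_closedBall_inter_subset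
    (sub_nonneg.2 hδ1.le) (sub_le_self 1 hδ0.le) x y
  have hAz : A + closedBall 0 δ ⊆ closedBall z 1 := by
    simpa using add_closedBall_zero_subset_closedBall
      ((subset_inter (mem_cDual_iff.1 hy) hAx).trans hz) δ
  refine ⟨z, mem_cDual_iff.2 hAz, y - z, ?_, add_sub_cancel z y⟩
  rw [mem_closedBall_zero_iff, ← dist_eq_norm]
  convert hyz using 2
  ring

/-- Quantitative continuity of the `c`-duality: if `A + B(0,δ)` has out-radius at most `1`,
then `(A + δB)^c ⊆ A^c ⊆ (A + δB)^c + η(δ)B` where `η(δ) = √(2δ - δ²)`. -/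
theorem stmt9 (n : ℕ) (hn : 1 ≤ n) (δ : ℝ) (hδ : δ ∈ Set.Ioo (0 : ℝ) 1)
    (A : Set (EuclideanSpace ℝ (Fin n)))
    (hout : ∃ x : EuclideanSpace ℝ (Fin n),
      A + closedBall (0 : EuclideanSpace ℝ (Fin n)) δ ⊆ closedBall x 1) :
    cDual (A + closedBall (0 : EuclideanSpace ℝ (Fin n)) δ) ⊆ cDual A ∧
      cDual A ⊆ cDual (A + closedBall (0 : EuclideanSpace ℝ (Fin n)) δ) +
        closedBall (0 : EuclideanSpace ℝ (Fin n)) (Real.sqrt (2 * δ - δ ^ 2)) :=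
  stmt9_general n δ hδ A hout
end
end
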